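/- Let $X$ be a Banach space, $1 \le p < t < r < \infty$, and $k \in \mathbb{Z}$. For the dyadic averaging operator $E_k$, there is a constant $C$ depending only on $n, r, t$ such that $\|E_k(f)\|_{M_p^{t,r}(X)} \le C \|f\|_{M_p^{t,r}(X)}$ for every $f \in M_p^{t,r}(X)$. -/

import Mathlib

open MeasureTheory Filter ENNReal

noncomputable section

/-- The dyadic cube `Q_{j,m} = ∏ᵢ [2^{-j} mᵢ, 2^{-j}(mᵢ+1))` in `ℝⁿ`. -/
def dyadicCube (n : ℕ) (j : ℤ) (m : Fin n → ℤ) : Set (Fin n → ℝ) :=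
  {x | ∀ i, (2:ℝ) ^ (-(j:ℝ)) * m i ≤ x i ∧ x i < (2:ℝ) ^ (-(j:ℝ)) * (m i + 1)}

/-- The volume `2^{-jn}` of a dyadic cube of generation `j`, as an extended nonnegative real. -/
def cubeVol (n : ℕ) (j : ℤ) : ℝ≥0∞ := (2:ℝ≥0∞) ^ (-((j:ℝ) * n))

/-- The `ℓ^r` norm of an `ℝ≥0∞`-valued family, `r ∈ (0,∞]`. -/
def lrNorm {ι : Type*} (r : ℝ≥0∞) (a : ι → ℝ≥0∞) : ℝ≥0∞ :=
  if r = ∞ then ⨆ i, a i else (∑' i, a i ^ r.toReal) ^ (1 / r.toReal)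

/-- The Bourgain–Morrey norm of an `X`-valued function on `ℝⁿ`. -/
def BMnorm (n : ℕ) (p t : ℝ) (r : ℝ≥0∞) {X : Type*} [NormedAddCommGroup X]
    (f : (Fin n → ℝ) → X) : ℝ≥0∞ :=
  lrNorm r fun jm : ℤ × (Fin n → ℤ) =>
    cubeVol n jm.1 ^ (1/t - 1/p) *
      (∫⁻ x in dyadicCube n jm.1 jm.2, (‖f x‖₊ : ℝ≥0∞) ^ p) ^ (1/p)

/-- Membership in the Bourgain–Morrey space `M_p^{t,r}(X)`. -/
def MemBM (n : ℕ) (p t : ℝ) (r : ℝ≥0∞) {X : Type*} [NormedAddCommGroup X]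
    (f : (Fin n → ℝ) → X) : Prop :=
  AEStronglyMeasurable f volume ∧ BMnorm n p t r f < ∞

/-- The conjugate exponent `a' = a/(a-1)`. -/
def conj (a : ℝ) : ℝ := a / (a - 1)

/-- The conjugate exponent of `r ∈ (1,∞]`, with `∞' = 1`. -/
def conjE (r : ℝ≥0∞) : ℝ := if r = ∞ then 1 else conj r.toReal

/-- A `(p',t',Y)`-block supported on the dyadic cube `Q_{j,k}`. -/
def IsBlock (n : ℕ) (p t : ℝ) (j : ℤ) (k : Fin n → ℤ) {Y : Type*} [NormedAddCommGroup Y]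
    (b : (Fin n → ℝ) → Y) : Prop :=
  AEStronglyMeasurable b volume ∧ (∀ x, x ∉ dyadicCube n j k → b x = 0) ∧
    (∫⁻ x, (‖b x‖₊ : ℝ≥0∞) ^ conj p) ^ (1 / conj p) ≤ cubeVol n j ^ (1/t - 1/p)

/-- A representation of `f` as an a.e. convergent sum of blocks with coefficients `lam`. -/
def IsBlockRep (n : ℕ) (p t : ℝ) {Y : Type*} [NormedAddCommGroup Y] [NormedSpace ℝ Y]
    (f : (Fin n → ℝ) → Y) (lam : ℤ × (Fin n → ℤ) → ℝ)
    (b : ℤ × (Fin n → ℤ) → (Fin n → ℝ) → Y) : Prop :=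
  (∀ jk : ℤ × (Fin n → ℤ), IsBlock n p t jk.1 jk.2 (b jk)) ∧
    ∀ᵐ x : Fin n → ℝ ∂volume, HasSum (fun jk => lam jk • b jk x) (f x)

/-- The norm of the block space `𝓗_{p'}^{t',r'}(Y)` (parametrized by `p`, `t` and `r'`). -/
def blockNorm (n : ℕ) (p t r' : ℝ) {Y : Type*} [NormedAddCommGroup Y] [NormedSpace ℝ Y]
    (f : (Fin n → ℝ) → Y) : ℝ≥0∞ :=
  ⨅ (lam : ℤ × (Fin n → ℤ) → ℝ) (b : ℤ × (Fin n → ℤ) → (Fin n → ℝ) → Y)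
    (_ : IsBlockRep n p t f lam b),
    (∑' jk : ℤ × (Fin n → ℤ), ENNReal.ofReal |lam jk| ^ r') ^ (1 / r')

/-- Membership in the block space `𝓗_{p'}^{t',r'}(Y)`. -/
def MemBlock (n : ℕ) (p t r' : ℝ) {Y : Type*} [NormedAddCommGroup Y] [NormedSpace ℝ Y]
    (f : (Fin n → ℝ) → Y) : Prop := blockNorm n p t r' f < ∞

/-- The dyadic averaging operator `E_k` at generation `k`. -/
def Ek (n : ℕ) {X : Type*} [NormedAddCommGroup X] [NormedSpace ℝ X]
    (k : ℤ) (f : (Fin n → ℝ) → X) (x : Fin n → ℝ) : X :=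
  ((2:ℝ) ^ ((k:ℝ) * n)) • ∫ y in dyadicCube n k fun i => ⌊(2:ℝ) ^ (k:ℝ) * x i⌋, f y

/-!
On a cube `Q` of generation `j ≤ k`, which is a disjoint union of cubes of generation `k`,
Hölder's inequality on each of these shows `∫_Q ‖E_k f‖^p ≤ ∫_Q ‖f‖^p`, so those terms of the
Bourgain–Morrey sum do not grow. A cube `Q_{k+d,m}` lies in its ancestor `Q_{k,m'}`, on which
`E_k f` is constant, and the same estimate bounds its term by `2^{-dn/t}` times the term of
`Q_{k,m'}`. Every cube has `2^{dn}` descendants of generation `k + d`, so that generation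
contributes at most `q^d` times generation `k`, where `q = 2^{n(1 - r/t)} < 1` because `t < r`;
the geometric series gives the constant, and as `q ≤ 2^{1 - r/t}` for `n ≥ 1` it can be taken
independent of `n`. In dimension `0` every cube is the whole space, so a finite norm forces all
terms, and hence the norm, to vanish.
-/

open Function

section DyadicCubes

variable {n : ℕ}

def dyadicIndex (n : ℕ) (k : ℤ) (x : Fin n → ℝ) : Fin n → ℤ :=
  fun i => ⌊(2:ℝ) ^ (k:ℝ) * x i⌋

def dyadicAncestor (d : ℕ) (m : Fin n → ℤ) : Fin n → ℤ :=
  fun i => m i / (2 ^ d : ℕ)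

lemma dyadicCube_eq_pi (j : ℤ) (m : Fin n → ℤ) :
    dyadicCube n j m =
      Set.univ.pi fun i => Set.Ico ((2:ℝ) ^ (-(j:ℝ)) * m i) ((2:ℝ) ^ (-(j:ℝ)) * (m i + 1)) := by
  ext x
  simp [dyadicCube]

lemma measurableSet_dyadicCube (j : ℤ) (m : Fin n → ℤ) : MeasurableSet (dyadicCube n j m) := by
  rw [dyadicCube_eq_pi]
  exact .univ_pi fun _ => measurableSet_Ico

lemma volume_dyadicCube (j : ℤ) (m : Fin n → ℤ) : volume (dyadicCube n j m) = cubeVol n j := by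
  rw [dyadicCube_eq_pi, volume_pi_pi]
  simp only [Real.volume_Ico, ← mul_sub, add_sub_cancel_left, mul_one, Finset.prod_const,
    Finset.card_univ, Fintype.card_fin]
  rw [← ENNReal.ofReal_rpow_of_pos two_pos, ENNReal.ofReal_ofNat, ← ENNReal.rpow_mul_natCast,
    cubeVol, neg_mul]

lemma cubeVol_ne_zero (n : ℕ) (j : ℤ) : cubeVol n j ≠ 0 := by
  simp [cubeVol, ENNReal.rpow_eq_zero_iff]

lemma cubeVol_ne_top (n : ℕ) (j : ℤ) : cubeVol n j ≠ ∞ := by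
  simp [cubeVol, ENNReal.rpow_eq_top_iff]

lemma cubeVol_add (n : ℕ) (k : ℤ) (d : ℕ) :
    cubeVol n (k + d) = (2:ℝ≥0∞) ^ (-((d:ℝ) * n)) * cubeVol n k := by
  rw [cubeVol, cubeVol, ← ENNReal.rpow_add _ _ two_ne_zero ofNat_ne_top]
  congr 1
  push_cast
  ring

lemma mem_dyadicCube_iff {j : ℤ} {m : Fin n → ℤ} {x : Fin n → ℝ} :
    x ∈ dyadicCube n j m ↔ dyadicIndex n j x = m := by
  have h2 : (0:ℝ) < 2 ^ (j:ℝ) := Real.rpow_pos_of_pos two_pos _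
  simp only [dyadicCube, Set.mem_ofPred_eq, funext_iff, dyadicIndex, Int.floor_eq_iff,
    Real.rpow_neg two_pos.le, inv_mul_le_iff₀ h2, lt_inv_mul_iff₀ h2]

lemma mem_dyadicCube_dyadicIndex (k : ℤ) (x : Fin n → ℝ) :
    x ∈ dyadicCube n k (dyadicIndex n k x) :=
  mem_dyadicCube_iff.2 rfl

lemma dyadicIndex_eq_dyadicAncestor (k : ℤ) (d : ℕ) (x : Fin n → ℝ) :
    dyadicIndex n k x = dyadicAncestor d (dyadicIndex n (k + d) x) := by
  funext i
  have h : (2:ℝ) ^ (k:ℝ) * x i = (2:ℝ) ^ ((k + d : ℤ) : ℝ) * x i / (2 ^ d : ℕ) := by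
    rw [Int.cast_add, Real.rpow_add two_pos, Int.cast_natCast, Real.rpow_natCast]
    push_cast
    field_simp
  simp only [dyadicIndex, dyadicAncestor, h, Int.floor_div_natCast]

lemma dyadicCube_subset_dyadicAncestor (k : ℤ) (d : ℕ) (m : Fin n → ℤ) :
    dyadicCube n (k + d) m ⊆ dyadicCube n k (dyadicAncestor d m) := by
  intro x hx
  rw [mem_dyadicCube_iff] at hx ⊢
  rw [dyadicIndex_eq_dyadicAncestor k d, hx]

lemma pairwise_disjoint_dyadicCube (j : ℤ) : Pairwise (Disjoint on dyadicCube n j) :=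
  fun _ _ hne => Set.disjoint_left.2 fun _ hx hx' =>
    hne ((mem_dyadicCube_iff.1 hx).symm.trans (mem_dyadicCube_iff.1 hx'))

lemma iUnion_dyadicCube (j : ℤ) : ⋃ m, dyadicCube n j m = Set.univ :=
  Set.eq_univ_of_forall fun x => Set.mem_iUnion.2 ⟨_, mem_dyadicCube_dyadicIndex j x⟩

lemma tsum_comp_dyadicAncestor (d : ℕ) (F : (Fin n → ℤ) → ℝ≥0∞) :
    ∑' m, F (dyadicAncestor d m) = (2:ℝ≥0∞) ^ (d * n) * ∑' m, F m := by
  let e : (Fin n → ℤ) ≃ (Fin n → ℤ) × (Fin n → Fin (2 ^ d)) :=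
    (Equiv.piCongrRight fun _ => Int.divModEquiv (2 ^ d)).trans
      (Equiv.arrowProdEquivProdArrow _ _ _)
  calc ∑' m, F (dyadicAncestor d m) = ∑' z : (Fin n → ℤ) × (Fin n → Fin (2 ^ d)), F z.1 :=
        e.tsum_eq (fun z => F z.1)
    _ = _ := by
        rw [ENNReal.tsum_prod', ← ENNReal.tsum_mul_left]
        congr 1
        funext m
        simp [← pow_mul, mul_comm d n]

end DyadicCubes

section AveragingOperator

variable {n : ℕ} {X : Type*} [NormedAddCommGroup X] [NormedSpace ℝ X]

lemma Ek_eq_of_mem {k : ℤ} {m : Fin n → ℤ} {x : Fin n → ℝ} (f : (Fin n → ℝ) → X)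
    (hx : x ∈ dyadicCube n k m) :
    Ek n k f x = ((2:ℝ) ^ ((k:ℝ) * n)) • ∫ y in dyadicCube n k m, f y := by
  rw [← mem_dyadicCube_iff.1 hx]
  rfl

lemma enorm_two_rpow_eq_inv_cubeVol (n : ℕ) (k : ℤ) :
    ‖(2:ℝ) ^ ((k:ℝ) * n)‖ₑ = (cubeVol n k)⁻¹ := by
  rw [Real.enorm_eq_ofReal (by positivity), ← ENNReal.ofReal_rpow_of_pos two_pos,
    ENNReal.ofReal_ofNat, cubeVol, ENNReal.rpow_neg, inv_inv]

lemma inv_mul_rpow_one_sub {x : ℝ≥0∞} (hx0 : x ≠ 0) (hx : x ≠ ∞) (s : ℝ) :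
    x⁻¹ * x ^ (1 - s) = x⁻¹ ^ s := by
  rw [← ENNReal.rpow_neg_one, ← ENNReal.rpow_add _ _ hx0 hx, ← ENNReal.rpow_mul]
  ring_nf

lemma enorm_Ek_rpow_le {k : ℤ} {m : Fin n → ℤ} {x : Fin n → ℝ} {f : (Fin n → ℝ) → X}
    (hf : AEStronglyMeasurable f volume) {p : ℝ} (hp : 1 ≤ p) (hx : x ∈ dyadicCube n k m) :
    ‖Ek n k f x‖ₑ ^ p ≤ (cubeVol n k)⁻¹ * ∫⁻ y in dyadicCube n k m, ‖f y‖ₑ ^ p := by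
  have holder := eLpNorm'_le_eLpNorm'_mul_rpow_measure_univ one_pos hp
    (hf.restrict (s := dyadicCube n k m))
  simp only [eLpNorm', ENNReal.rpow_one, div_one, Measure.restrict_apply_univ,
    volume_dyadicCube] at holder
  set V := cubeVol n k
  set I := ∫⁻ y in dyadicCube n k m, ‖f y‖ₑ ^ p
  have hEk : ‖Ek n k f x‖ₑ ≤ (V⁻¹ * I) ^ (1 / p) :=
    calc ‖Ek n k f x‖ₑ ≤ V⁻¹ * ∫⁻ y in dyadicCube n k m, ‖f y‖ₑ := by
          rw [Ek_eq_of_mem f hx, enorm_smul, enorm_two_rpow_eq_inv_cubeVol]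
          gcongr
          exact enorm_integral_le_lintegral_enorm _
      _ ≤ V⁻¹ * (I ^ (1 / p) * V ^ (1 - 1 / p)) := by gcongr
      _ = (V⁻¹ * I) ^ (1 / p) := by
          rw [mul_comm (I ^ _), ← mul_assoc, inv_mul_rpow_one_sub (cubeVol_ne_zero n k)
            (cubeVol_ne_top n k), ENNReal.mul_rpow_of_nonneg _ _ (by positivity)]
  calc ‖Ek n k f x‖ₑ ^ p ≤ ((V⁻¹ * I) ^ (1 / p)) ^ p := by gcongr
    _ = V⁻¹ * I := by rw [← ENNReal.rpow_mul, one_div_mul_cancel (by positivity), ENNReal.rpow_one]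

end AveragingOperator

section LocalBounds

variable {n : ℕ} {X : Type*} [NormedAddCommGroup X] [NormedSpace ℝ X]
  {f : (Fin n → ℝ) → X} {p : ℝ}

lemma dyadicCube_subset_or_disjoint {j k : ℤ} (hjk : j ≤ k) (m m' : Fin n → ℤ) :
    dyadicCube n k m' ⊆ dyadicCube n j m ∨ Disjoint (dyadicCube n k m') (dyadicCube n j m) := by
  obtain ⟨d, rfl⟩ := Int.le.dest hjk
  by_cases h : dyadicAncestor d m' = m
  · exact .inl (h ▸ dyadicCube_subset_dyadicAncestor j d m')
  · exact .inr ((pairwise_disjoint_dyadicCube j h).mono_left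
      (dyadicCube_subset_dyadicAncestor j d m'))

lemma setLIntegral_eq_tsum_dyadicCube_inter (k : ℤ) (A : Set (Fin n → ℝ))
    (F : (Fin n → ℝ) → ℝ≥0∞) :
    ∫⁻ x in A, F x = ∑' m, ∫⁻ x in dyadicCube n k m ∩ A, F x := by
  rw [← Measure.restrict_univ (μ := volume.restrict A), ← iUnion_dyadicCube k,
    lintegral_iUnion (measurableSet_dyadicCube k) (pairwise_disjoint_dyadicCube k)]
  simp only [Measure.restrict_restrict (measurableSet_dyadicCube _ _)]

lemma setLIntegral_Ek_rpow_le (hf : AEStronglyMeasurable f volume) (hp : 1 ≤ p) {k : ℤ}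
    {m : Fin n → ℤ} {A : Set (Fin n → ℝ)} (hA : A ⊆ dyadicCube n k m) :
    ∫⁻ x in A, ‖Ek n k f x‖ₑ ^ p ≤
      volume A * (cubeVol n k)⁻¹ * ∫⁻ y in dyadicCube n k m, ‖f y‖ₑ ^ p :=
  calc ∫⁻ x in A, ‖Ek n k f x‖ₑ ^ p
      ≤ ∫⁻ _ in A, (cubeVol n k)⁻¹ * ∫⁻ y in dyadicCube n k m, ‖f y‖ₑ ^ p :=
        setLIntegral_mono measurable_const fun _ hx => enorm_Ek_rpow_le hf hp (hA hx)
    _ = _ := by rw [setLIntegral_const, mul_comm, mul_assoc]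

lemma setLIntegral_Ek_rpow_le_of_le (hf : AEStronglyMeasurable f volume) (hp : 1 ≤ p)
    {j k : ℤ} (hjk : j ≤ k) (m : Fin n → ℤ) :
    ∫⁻ x in dyadicCube n j m, ‖Ek n k f x‖ₑ ^ p ≤ ∫⁻ x in dyadicCube n j m, ‖f x‖ₑ ^ p := by
  rw [setLIntegral_eq_tsum_dyadicCube_inter k, setLIntegral_eq_tsum_dyadicCube_inter k]
  refine ENNReal.tsum_le_tsum fun m' => ?_
  rcases dyadicCube_subset_or_disjoint hjk m m' with hsub | hdisj
  · rw [Set.inter_eq_left.2 hsub]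
    refine (setLIntegral_Ek_rpow_le hf hp subset_rfl).trans_eq ?_
    rw [volume_dyadicCube, ENNReal.mul_inv_cancel (cubeVol_ne_zero n k) (cubeVol_ne_top n k),
      one_mul]
  · simp [hdisj.inter_eq]

lemma setLIntegral_Ek_rpow_le_dyadicAncestor (hf : AEStronglyMeasurable f volume) (hp : 1 ≤ p)
    (k : ℤ) (d : ℕ) (m : Fin n → ℤ) :
    ∫⁻ x in dyadicCube n (k + d) m, ‖Ek n k f x‖ₑ ^ p ≤
      (2:ℝ≥0∞) ^ (-((d:ℝ) * n)) * ∫⁻ y in dyadicCube n k (dyadicAncestor d m), ‖f y‖ₑ ^ p := by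
  refine (setLIntegral_Ek_rpow_le hf hp (dyadicCube_subset_dyadicAncestor k d m)).trans_eq ?_
  rw [volume_dyadicCube, cubeVol_add, mul_assoc (2 ^ _),
    ENNReal.mul_inv_cancel (cubeVol_ne_zero n k) (cubeVol_ne_top n k), mul_one]

end LocalBounds

section BourgainMorrey

variable {n : ℕ} {X : Type*} [NormedAddCommGroup X] {p t r : ℝ}

def bmTerm (n : ℕ) (p t : ℝ) (f : (Fin n → ℝ) → X) (jm : ℤ × (Fin n → ℤ)) : ℝ≥0∞ :=
  cubeVol n jm.1 ^ (1/t - 1/p) * (∫⁻ x in dyadicCube n jm.1 jm.2, ‖f x‖ₑ ^ p) ^ (1/p)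

lemma BMnorm_ofReal (hr : 0 ≤ r) (f : (Fin n → ℝ) → X) :
    BMnorm n p t (ENNReal.ofReal r) f = (∑' jm, bmTerm n p t f jm ^ r) ^ (1 / r) := by
  rw [BMnorm, lrNorm, if_neg ofReal_ne_top, toReal_ofReal hr]
  rfl

lemma BMnorm_eq_zero_of_dim_zero (hr : 0 < r) {f : (Fin 0 → ℝ) → X}
    (hf : BMnorm 0 p t (ENNReal.ofReal r) f < ∞) : BMnorm 0 p t (ENNReal.ofReal r) f = 0 := by
  have hcube : ∀ j m, dyadicCube 0 j m = Set.univ := fun j m => by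
    ext x
    simp [dyadicCube]
  have hconst : ∀ jm, bmTerm 0 p t f jm ^ r = ((∫⁻ x, ‖f x‖ₑ ^ p) ^ (1/p)) ^ r := fun jm => by
    simp [bmTerm, cubeVol, hcube]
  rw [BMnorm_ofReal hr.le, tsum_congr hconst] at hf ⊢
  rcases eq_or_ne (((∫⁻ x, ‖f x‖ₑ ^ p) ^ (1/p)) ^ r) 0 with h | h
  · rw [h, tsum_zero, ENNReal.zero_rpow_of_pos (by positivity)]
  · rw [ENNReal.tsum_const_eq_top_of_ne_zero h, ENNReal.top_rpow_of_pos (by positivity)] at hf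
    exact absurd hf (lt_irrefl ∞)

variable [NormedSpace ℝ X] {f : (Fin n → ℝ) → X}

lemma bmTerm_Ek_le_of_le (hf : AEStronglyMeasurable f volume) (hp : 1 ≤ p) {j k : ℤ}
    (hjk : j ≤ k) (m : Fin n → ℤ) :
    bmTerm n p t (Ek n k f) (j, m) ≤ bmTerm n p t f (j, m) := by
  unfold bmTerm
  gcongr _ * ?_ ^ _
  exact setLIntegral_Ek_rpow_le_of_le hf hp hjk m

lemma bmTerm_Ek_add_le (hf : AEStronglyMeasurable f volume) (hp : 1 ≤ p) (k : ℤ) (d : ℕ)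
    (m : Fin n → ℤ) :
    bmTerm n p t (Ek n k f) (k + d, m) ≤
      (2:ℝ≥0∞) ^ (-((d:ℝ) * n) / t) * bmTerm n p t f (k, dyadicAncestor d m) := by
  set a : ℝ := -((d:ℝ) * n)
  calc bmTerm n p t (Ek n k f) (k + d, m)
      ≤ (2 ^ a * cubeVol n k) ^ (1/t - 1/p) *
          (2 ^ a * ∫⁻ y in dyadicCube n k (dyadicAncestor d m), ‖f y‖ₑ ^ p) ^ (1/p) := by
        unfold bmTerm
        rw [cubeVol_add]
        gcongr
        exact setLIntegral_Ek_rpow_le_dyadicAncestor hf hp k d m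
    _ = _ := by
        rw [ENNReal.mul_rpow_of_ne_top (by simp) (cubeVol_ne_top n k),
          ENNReal.mul_rpow_of_nonneg _ _ (by positivity), ← ENNReal.rpow_mul, ← ENNReal.rpow_mul,
          bmTerm, mul_mul_mul_comm, ← ENNReal.rpow_add _ _ two_ne_zero ofNat_ne_top]
        ring_nf

lemma tsum_bmTerm_Ek_add_le (hf : AEStronglyMeasurable f volume) (hp : 1 ≤ p) (hr : 0 ≤ r)
    (k : ℤ) (d : ℕ) :
    ∑' m, bmTerm n p t (Ek n k f) (k + d, m) ^ r ≤
      ((2:ℝ≥0∞) ^ ((n:ℝ) * (1 - r/t))) ^ d * ∑' m, bmTerm n p t f (k, m) ^ r :=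
  calc ∑' m, bmTerm n p t (Ek n k f) (k + d, m) ^ r
      ≤ ∑' m, ((2:ℝ≥0∞) ^ (-((d:ℝ) * n) / t) * bmTerm n p t f (k, dyadicAncestor d m)) ^ r :=
        ENNReal.tsum_le_tsum fun m => by gcongr; exact bmTerm_Ek_add_le hf hp k d m
    _ = (2:ℝ≥0∞) ^ (-((d:ℝ) * n) / t * r) * 2 ^ (d * n) * ∑' m, bmTerm n p t f (k, m) ^ r := by
        simp only [ENNReal.mul_rpow_of_nonneg _ _ hr, ENNReal.tsum_mul_left, ← ENNReal.rpow_mul,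
          tsum_comp_dyadicAncestor d fun m => bmTerm n p t f (k, m) ^ r, mul_assoc]
    _ = _ := by
        rw [← ENNReal.rpow_natCast (2:ℝ≥0∞) (d * n), ← ENNReal.rpow_add _ _ two_ne_zero
          ofNat_ne_top, ← ENNReal.rpow_mul_natCast]
        congr 2
        push_cast
        ring

end BourgainMorrey

lemma tsum_int_le_of_le_geometric {G A : ℤ → ℝ≥0∞} {q : ℝ≥0∞} (k : ℤ)
    (hlt : ∀ j < k, G j ≤ A j) (hge : ∀ d : ℕ, G (k + d) ≤ q ^ d * A k) :
    ∑' j, G j ≤ (1 + (1 - q)⁻¹) * ∑' j, A j := by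
  have hfine : ∑' j, (Set.Iio k).indicator G j ≤ ∑' j, A j :=
    ENNReal.tsum_le_tsum fun j => Set.indicator_apply_le' (hlt j) fun _ => zero_le
  have hcoarse : ∑' j, (Set.Iio k)ᶜ.indicator G j ≤ (1 - q)⁻¹ * ∑' j, A j :=
    calc ∑' j, (Set.Iio k)ᶜ.indicator G j = ∑' d : ℕ, G (k + d) := by
          rw [← (add_right_injective k).comp Nat.cast_injective |>.tsum_eq]
          · simp
          · intro j hj
            have hkj : k ≤ j := not_lt.1 (Set.indicator_apply_ne_zero.1 hj).1
            exact ⟨(j - k).toNat, by simp only [comp_apply]; omega⟩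
      _ ≤ ∑' d : ℕ, q ^ d * A k := ENNReal.tsum_le_tsum hge
      _ ≤ (1 - q)⁻¹ * ∑' j, A j := by
          rw [ENNReal.tsum_mul_right, ENNReal.tsum_geometric]
          gcongr
          exact ENNReal.le_tsum k
  calc ∑' j, G j = ∑' j, (Set.Iio k).indicator G j + ∑' j, (Set.Iio k)ᶜ.indicator G j := by
        rw [← ENNReal.tsum_add]
        simp only [Set.indicator_self_add_compl_apply]
    _ ≤ _ := by rw [add_mul, one_mul]; gcongr

theorem BMnorm_Ek_le {n : ℕ} {X : Type*} [NormedAddCommGroup X] [NormedSpace ℝ X]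
    {p t r : ℝ} (hp : 1 ≤ p) (hr : 0 < r) {f : (Fin n → ℝ) → X}
    (hf : AEStronglyMeasurable f volume) (k : ℤ) :
    BMnorm n p t (ENNReal.ofReal r) (Ek n k f) ≤
      (1 + (1 - (2:ℝ≥0∞) ^ ((n:ℝ) * (1 - r/t)))⁻¹) ^ (1/r) *
        BMnorm n p t (ENNReal.ofReal r) f := by
  rw [BMnorm_ofReal hr.le, BMnorm_ofReal hr.le, ← ENNReal.mul_rpow_of_nonneg _ _ (by positivity),
    ENNReal.tsum_prod', ENNReal.tsum_prod']
  gcongr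
  refine tsum_int_le_of_le_geometric k (fun j hj => ?_) (tsum_bmTerm_Ek_add_le hf hp hr.le k)
  exact ENNReal.tsum_le_tsum fun m => by gcongr; exact bmTerm_Ek_le_of_le hf hp hj.le m

theorem Ek_bounded_on_BM_general (n : ℕ) (t r : ℝ)
    {X : Type*} [NormedAddCommGroup X] [NormedSpace ℝ X]
    (htr : t < r) (ht : 1 < t) :
    ∃ C : ℝ≥0∞, 0 < C ∧ C < ∞ ∧
      ∀ p : ℝ, 1 ≤ p → p < t → ∀ k : ℤ, ∀ f : (Fin n → ℝ) → X,
        MemBM n p t (ENNReal.ofReal r) f →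
          BMnorm n p t (ENNReal.ofReal r) (Ek n k f) ≤
            C * BMnorm n p t (ENNReal.ofReal r) f := by
  have hr : 0 < r := by linarith
  have hexp : 1 - r / t < 0 := by rw [sub_neg, one_lt_div (by linarith)]; exact htr
  have hq : (2:ℝ≥0∞) ^ (1 - r/t) < 1 := ENNReal.rpow_lt_one_of_one_lt_of_neg one_lt_two hexp
  have hK : 1 + (1 - (2:ℝ≥0∞) ^ (1 - r/t))⁻¹ ≠ ∞ :=
    ENNReal.add_ne_top.2 ⟨one_ne_top, ENNReal.inv_ne_top.2 (tsub_pos_of_lt hq).ne'⟩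
  refine ⟨(1 + (1 - (2:ℝ≥0∞) ^ (1 - r/t))⁻¹) ^ (1/r), by positivity,
    ENNReal.rpow_lt_top_of_nonneg (by positivity) hK, fun p hp _ k f hf => ?_⟩
  obtain rfl | hn := Nat.eq_zero_or_pos n
  · have hbound := BMnorm_Ek_le hp hr hf.1 k (t := t)
    rwa [BMnorm_eq_zero_of_dim_zero hr hf.2, mul_zero] at hbound ⊢
  refine (BMnorm_Ek_le hp hr hf.1 k).trans ?_
  gcongr (1 + (1 - ?_)⁻¹) ^ _ * _
  have hn1 : (1:ℝ) ≤ n := by exact_mod_cast hn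
  exact ENNReal.rpow_le_rpow_of_exponent_le one_le_two (by nlinarith)

theorem Ek_bounded_on_BM (n : ℕ) (t r : ℝ)
    {X : Type*} [NormedAddCommGroup X] [NormedSpace ℝ X] [CompleteSpace X]
    (htr : t < r) (ht : 1 < t) :
    ∃ C : ℝ≥0∞, 0 < C ∧ C < ∞ ∧
      ∀ p : ℝ, 1 ≤ p → p < t → ∀ k : ℤ, ∀ f : (Fin n → ℝ) → X,
        MemBM n p t (ENNReal.ofReal r) f →
          BMnorm n p t (ENNReal.ofReal r) (Ek n k f) ≤
            C * BMnorm n p t (ENNReal.ofReal r) f :=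
  Ek_bounded_on_BM_general n t r htr ht

end
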